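/- Let (π₁, π₂) be a chainable pair of patterns with πᵢ = (aᵢ, bᵢ, cᵢ, dᵢ). Then for each equivalence class P ∈ P(S_{π₁}, S_{π₂}): (1) R_P is the set of nonzero entries of the column S_{π₁}[:,i] and C_P is the set of nonzero entries of the row S_{π₂}[i,:], for every i ∈ P; (2) the sets R_P × C_P, for P ranging over P(S_{π₁}, S_{π₂}), are pairwise disjoint; (3) |P| = r(π₁, π₂), |R_P| = b₁ and |C_P| = c₂; (4) the set of nonzero entries of S_{π₁*π₂} equals the set of nonzero entries of S_{π₁}·S_{π₂}, which equals the union over P of R_P × C_P. -/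

import Mathlib

/-- A *pattern* is a tuple `(a, b, c, d)` of (positive) natural numbers. -/
structure Pattern where
  a : ℕ
  b : ℕ
  c : ℕ
  d : ℕ

namespace Pattern

/-- The entries of a pattern are positive integers. -/
def Pos (π : Pattern) : Prop := 0 < π.a ∧ 0 < π.b ∧ 0 < π.c ∧ 0 < π.d

/-- Number of rows `a*b*d` of a `π`-factor. -/
def rows (π : Pattern) : ℕ := π.a * π.b * π.d

/-- Number of columns `a*c*d` of a `π`-factor. -/
def cols (π : Pattern) : ℕ := π.a * π.c * π.d

/-- `r(π₁, π₂) = a₁c₁/a₂ (= b₂d₂/d₁)`. -/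
def rk (π₁ π₂ : Pattern) : ℕ := π₁.a * π₁.c / π₂.a

/-- A pair of patterns is *chainable* if `a₁c₁/a₂ = b₂d₂/d₁` is a positive integer,
`a₁ ∣ a₂` and `d₂ ∣ d₁`. -/
def Chainable (π₁ π₂ : Pattern) : Prop :=
  π₂.a ∣ π₁.a * π₁.c ∧ π₁.d ∣ π₂.b * π₂.d ∧
    π₁.a * π₁.c / π₂.a = π₂.b * π₂.d / π₁.d ∧
    0 < π₁.a * π₁.c / π₂.a ∧ π₁.a ∣ π₂.a ∧ π₂.d ∣ π₁.d

/-- `π₁ * π₂ := (a₁, b₁d₁/d₂, a₂c₂/a₁, d₂)`. -/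
instance : Mul Pattern :=
  ⟨fun π₁ π₂ => ⟨π₁.a, π₁.b * π₁.d / π₂.d, π₂.a * π₂.c / π₁.a, π₂.d⟩⟩

/-- `‖π‖₀ := a*b*c*d`. -/
def norm0 (π : Pattern) : ℕ := π.a * π.b * π.c * π.d

end Pattern

open scoped Kronecker

/-- The flattening equivalence `(Fin a × Fin b) × Fin d ≃ Fin (a*b*d)`. -/
def kron3Equiv (a b d : ℕ) : (Fin a × Fin b) × Fin d ≃ Fin (a * b * d) :=
  (finProdFinEquiv.prodCongr (Equiv.refl (Fin d))).trans finProdFinEquiv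

/-- The support matrix `S_π = I_a ⊗ 1_{b×c} ⊗ I_d ∈ {0,1}^{abd × acd}`. -/
def Pattern.S (π : Pattern) : Matrix (Fin π.rows) (Fin π.cols) ℕ :=
  Matrix.reindex (kron3Equiv π.a π.b π.d) (kron3Equiv π.a π.c π.d)
    ((1 : Matrix (Fin π.a) (Fin π.a) ℕ) ⊗ₖ
      (Matrix.of fun _ _ => (1 : ℕ) : Matrix (Fin π.b) (Fin π.c) ℕ) ⊗ₖ
      (1 : Matrix (Fin π.d) (Fin π.d) ℕ))

/-- Reindexing a matrix along equalities of dimensions. -/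
def castMat {α : Type*} {m n m' n' : ℕ} (hm : m = m') (hn : n = n')
    (A : Matrix (Fin m) (Fin n) α) : Matrix (Fin m') (Fin n') α :=
  Matrix.of fun i j => A (Fin.cast hm.symm i) (Fin.cast hn.symm j)

/-- The rank-one contribution support `U_k = L[:,k] ⬝ R[k,:]` of binary matrices `(L, R)`. -/
def contrib {m r n : ℕ} (L : Matrix (Fin m) (Fin r) ℕ) (R : Matrix (Fin r) (Fin n) ℕ)
    (k : Fin r) : Matrix (Fin m) (Fin n) ℕ :=
  Matrix.of fun i j => L i k * R k j

open scoped Classical in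
/-- The equivalence classes `P(L,R)` of the relation `k ∼ k' ↔ U_k = U_k'` on `Fin r`. -/
noncomputable def classes {m r n : ℕ} (L : Matrix (Fin m) (Fin r) ℕ)
    (R : Matrix (Fin r) (Fin n) ℕ) : Finset (Finset (Fin r)) :=
  Finset.image (fun k => Finset.univ.filter fun k' => contrib L R k' = contrib L R k)
    Finset.univ

open scoped Classical in
/-- `R_P`: the set of indices of nonzero rows of the common rank-one support of `P`. -/
noncomputable def rowSupp {m r n : ℕ} (L : Matrix (Fin m) (Fin r) ℕ)
    (R : Matrix (Fin r) (Fin n) ℕ) (P : Finset (Fin r)) : Finset (Fin m) :=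
  Finset.univ.filter fun i => ∃ k ∈ P, ∃ j, contrib L R k i j ≠ 0

open scoped Classical in
/-- `C_P`: the set of indices of nonzero columns of the common rank-one support of `P`. -/
noncomputable def colSupp {m r n : ℕ} (L : Matrix (Fin m) (Fin r) ℕ)
    (R : Matrix (Fin r) (Fin n) ℕ) (P : Finset (Fin r)) : Finset (Fin n) :=
  Finset.univ.filter fun j => ∃ k ∈ P, ∃ i, contrib L R k i j ≠ 0
/-!
Entry `(i, k)` of `S_π` is nonzero iff the row key `(i / bd, i % d)` equals the column key
`(k / cd, k % d)`, so `S_π` is the 0/1 indicator of the equality of two key maps. For two such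
factors, `U_k` only depends on the column key of `k` for `π₁` and its row key for `π₂`, which
makes the classes, `R_P`, `C_P` and the disjointness transparent. Chainability gives
`c₁d₁ = r d₁ · a₂/a₁`, `b₂d₂ = r d₁` and `d₂ ∣ d₁`, so the pair of keys of a middle index `k`
carries the same information as `(k / r d₁, k % d₁)`, whose fibres have `r` elements; chaining
the keys of `π₁` and `π₂` through a middle index yields the keys of `π₁ * π₂`.
-/

open Finset

section RankOne

variable {m r n : ℕ} {L : Matrix (Fin m) (Fin r) ℕ} {R : Matrix (Fin r) (Fin n) ℕ}
  {P Q : Finset (Fin r)} {k k' : Fin r} {i : Fin m} {j : Fin n}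

lemma contrib_ne_zero_iff : contrib L R k i j ≠ 0 ↔ L i k ≠ 0 ∧ R k j ≠ 0 :=
  Nat.mul_ne_zero_iff

lemma mul_apply_ne_zero_iff : (L * R) i j ≠ 0 ↔ ∃ k, contrib L R k i j ≠ 0 := by
  simp [Matrix.mul_apply, contrib, sum_eq_zero_iff]

open scoped Classical in
lemma eq_filter_of_mem_classes (hP : P ∈ classes L R) (hk : k ∈ P) :
    P = univ.filter fun k' => contrib L R k' = contrib L R k := by
  obtain ⟨k₀, -, rfl⟩ := mem_image.1 hP
  simp only [mem_filter, mem_univ, true_and] at hk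
  simp only [hk]

open scoped Classical in
lemma mem_classes_iff_of_mem (hP : P ∈ classes L R) (hk : k ∈ P) :
    k' ∈ P ↔ contrib L R k' = contrib L R k := by
  rw [eq_filter_of_mem_classes hP hk, mem_filter, and_iff_right (mem_univ _)]

open scoped Classical in
lemma exists_mem_classes (k : Fin r) : ∃ P ∈ classes L R, k ∈ P :=
  ⟨_, mem_image_of_mem _ (mem_univ k), by simp⟩

open scoped Classical in
lemma exists_mem_of_mem_classes (hP : P ∈ classes L R) : ∃ k, k ∈ P := by
  obtain ⟨k, -, rfl⟩ := mem_image.1 hP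
  exact ⟨k, by simp⟩

open scoped Classical in
lemma eq_of_mem_classes (hP : P ∈ classes L R) (hQ : Q ∈ classes L R) (hkP : k ∈ P)
    (hkQ : k ∈ Q) : P = Q := by
  rw [eq_filter_of_mem_classes hP hkP, eq_filter_of_mem_classes hQ hkQ]

open scoped Classical in
lemma rowSupp_eq_filter (hR : ∀ k, ∃ j, R k j ≠ 0) (hP : P ∈ classes L R) (hk : k ∈ P) :
    rowSupp L R P = univ.filter fun i => L i k ≠ 0 := by
  ext i
  simp only [rowSupp, mem_filter, mem_univ, true_and]
  constructor
  · rintro ⟨k', hk', j, hne⟩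
    rw [(mem_classes_iff_of_mem hP hk).1 hk'] at hne
    exact (contrib_ne_zero_iff.1 hne).1
  · intro hik
    obtain ⟨j, hkj⟩ := hR k
    exact ⟨k, hk, j, contrib_ne_zero_iff.2 ⟨hik, hkj⟩⟩

open scoped Classical in
lemma colSupp_eq_filter (hL : ∀ k, ∃ i, L i k ≠ 0) (hP : P ∈ classes L R) (hk : k ∈ P) :
    colSupp L R P = univ.filter fun j => R k j ≠ 0 := by
  ext j
  simp only [colSupp, mem_filter, mem_univ, true_and]
  constructor
  · rintro ⟨k', hk', i, hne⟩
    rw [(mem_classes_iff_of_mem hP hk).1 hk'] at hne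
    exact (contrib_ne_zero_iff.1 hne).2
  · intro hkj
    obtain ⟨i, hik⟩ := hL k
    exact ⟨k, hk, i, contrib_ne_zero_iff.2 ⟨hik, hkj⟩⟩

open scoped Classical in
lemma exists_contrib_ne_zero_of_mem_rowSupp_of_mem_colSupp (hP : P ∈ classes L R)
    (hi : i ∈ rowSupp L R P) (hj : j ∈ colSupp L R P) : ∃ k ∈ P, contrib L R k i j ≠ 0 := by
  simp only [rowSupp, colSupp, mem_filter, mem_univ, true_and] at hi hj
  obtain ⟨k, hk, j', hij'⟩ := hi
  obtain ⟨k', hk', i', hi'j⟩ := hj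
  rw [(mem_classes_iff_of_mem hP hk).1 hk'] at hi'j
  exact ⟨k, hk, contrib_ne_zero_iff.2
    ⟨(contrib_ne_zero_iff.1 hij').1, (contrib_ne_zero_iff.1 hi'j).2⟩⟩

open scoped Classical in
lemma mul_apply_ne_zero_iff_exists_classes :
    (L * R) i j ≠ 0 ↔ ∃ P ∈ classes L R, i ∈ rowSupp L R P ∧ j ∈ colSupp L R P := by
  rw [mul_apply_ne_zero_iff]
  constructor
  · rintro ⟨k, hk⟩
    obtain ⟨P, hP, hkP⟩ := exists_mem_classes (L := L) (R := R) k
    simp only [rowSupp, colSupp, mem_filter, mem_univ, true_and]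
    exact ⟨P, hP, ⟨k, hkP, j, hk⟩, ⟨k, hkP, i, hk⟩⟩
  · rintro ⟨P, hP, hi, hj⟩
    obtain ⟨k, -, hk⟩ := exists_contrib_ne_zero_of_mem_rowSupp_of_mem_colSupp hP hi hj
    exact ⟨k, hk⟩

open scoped Classical in
lemma disjoint_rowSupp_product_colSupp
    (hov : ∀ k k' i j, contrib L R k i j ≠ 0 → contrib L R k' i j ≠ 0 →
      contrib L R k = contrib L R k')
    (hP : P ∈ classes L R) (hQ : Q ∈ classes L R) (hPQ : P ≠ Q) :
    Disjoint (rowSupp L R P ×ˢ colSupp L R P) (rowSupp L R Q ×ˢ colSupp L R Q) := by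
  refine disjoint_left.2 fun ⟨i, j⟩ hijP hijQ => hPQ ?_
  rw [mem_product] at hijP hijQ
  obtain ⟨k, hkP, hk⟩ := exists_contrib_ne_zero_of_mem_rowSupp_of_mem_colSupp hP hijP.1 hijP.2
  obtain ⟨k', hk'Q, hk'⟩ := exists_contrib_ne_zero_of_mem_rowSupp_of_mem_colSupp hQ hijQ.1 hijQ.2
  exact eq_of_mem_classes hP hQ hkP ((mem_classes_iff_of_mem hQ hk'Q).2 (hov k k' i j hk hk'))

end RankOne

def eqMatrix {ι κ α : Type*} [DecidableEq α] (f : ι → α) (g : κ → α) : Matrix ι κ ℕ :=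
  Matrix.of fun i j => if f i = g j then 1 else 0

@[simp]
lemma eqMatrix_apply_ne_zero_iff {ι κ α : Type*} [DecidableEq α] {f : ι → α} {g : κ → α}
    {i : ι} {j : κ} : eqMatrix f g i j ≠ 0 ↔ f i = g j := by
  simp [eqMatrix]

section EqMatrix

variable {m r n : ℕ} {α β : Type*} [DecidableEq α] [DecidableEq β] {f : Fin m → α}
  {g : Fin r → α} {f' : Fin r → β} {g' : Fin n → β} {k k' : Fin r}

lemma contrib_eqMatrix_congr (hg : g k = g k') (hf' : f' k = f' k') :
    contrib (eqMatrix f g) (eqMatrix f' g') k = contrib (eqMatrix f g) (eqMatrix f' g') k' := by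
  ext i j
  simp [contrib, eqMatrix, hg, hf']

lemma contrib_eqMatrix_eq_iff (hg : ∀ k, ∃ i, f i = g k) (hf' : ∀ k, ∃ j, f' k = g' j) :
    contrib (eqMatrix f g) (eqMatrix f' g') k = contrib (eqMatrix f g) (eqMatrix f' g') k' ↔
      g k = g k' ∧ f' k = f' k' := by
  refine ⟨fun h => ?_, fun h => contrib_eqMatrix_congr h.1 h.2⟩
  obtain ⟨i, hi⟩ := hg k
  obtain ⟨j, hj⟩ := hf' k
  have hne : contrib (eqMatrix f g) (eqMatrix f' g') k' i j ≠ 0 := by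
    rw [← h, contrib_ne_zero_iff, eqMatrix_apply_ne_zero_iff, eqMatrix_apply_ne_zero_iff]
    exact ⟨hi, hj⟩
  rw [contrib_ne_zero_iff, eqMatrix_apply_ne_zero_iff, eqMatrix_apply_ne_zero_iff] at hne
  exact ⟨hi.symm.trans hne.1, hj.trans hne.2.symm⟩

lemma contrib_eqMatrix_eq_of_ne_zero {i : Fin m} {j : Fin n}
    (hk : contrib (eqMatrix f g) (eqMatrix f' g') k i j ≠ 0)
    (hk' : contrib (eqMatrix f g) (eqMatrix f' g') k' i j ≠ 0) :
    contrib (eqMatrix f g) (eqMatrix f' g') k = contrib (eqMatrix f g) (eqMatrix f' g') k' := by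
  simp only [contrib_ne_zero_iff, eqMatrix_apply_ne_zero_iff] at hk hk'
  exact contrib_eqMatrix_congr (hk.1.symm.trans hk'.1) (hk.2.trans hk'.2.symm)

end EqMatrix

lemma val_kron3Equiv_symm_fst_fst {a b d : ℕ} (i : Fin (a * b * d)) :
    (((kron3Equiv a b d).symm i).1.1 : ℕ) = i / (b * d) := by
  simp [kron3Equiv, Fin.coe_divNat, Nat.div_div_eq_div_mul, mul_comm]

lemma val_kron3Equiv_symm_snd {a b d : ℕ} (i : Fin (a * b * d)) :
    (((kron3Equiv a b d).symm i).2 : ℕ) = i % d := by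
  simp [kron3Equiv, Fin.coe_modNat]

lemma reindex_kron3_eq_eqMatrix (a b c d : ℕ) :
    Matrix.reindex (kron3Equiv a b d) (kron3Equiv a c d)
      ((1 : Matrix (Fin a) (Fin a) ℕ) ⊗ₖ (Matrix.of fun _ _ => (1 : ℕ) : Matrix (Fin b) (Fin c) ℕ)
        ⊗ₖ (1 : Matrix (Fin d) (Fin d) ℕ)) =
      eqMatrix (fun i : Fin (a * b * d) => ((i : ℕ) / (b * d), (i : ℕ) % d))
        (fun j : Fin (a * c * d) => ((j : ℕ) / (c * d), (j : ℕ) % d)) := by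
  ext i j
  simp only [Matrix.reindex_apply, Matrix.submatrix_apply, Matrix.kroneckerMap_apply,
    Matrix.one_apply, Matrix.of_apply, eqMatrix, Fin.ext_iff, val_kron3Equiv_symm_fst_fst,
    val_kron3Equiv_symm_snd, Prod.ext_iff, mul_one, ite_zero_mul_ite_zero]

lemma card_filter_div_eq_and_mod_eq {N A r D X Z : ℕ} (hN : N = A * r * D) (hX : X < A)
    (hZ : Z < D) : #{k : Fin N | (k : ℕ) / (r * D) = X ∧ (k : ℕ) % D = Z} = r := by
  subst hN
  lift X to Fin A using hX
  lift Z to Fin D using hZ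
  rw [card_filter, ← Equiv.sum_comp (kron3Equiv A r D)]
  simp only [← val_kron3Equiv_symm_fst_fst, ← val_kron3Equiv_symm_snd, Equiv.symm_apply_apply,
    Fin.val_inj, Fintype.sum_prod_type, ite_and]
  simp

lemma exists_div_eq_and_mod_eq {N A r D X Z : ℕ} (hN : N = A * r * D) (hX : X < A) (hZ : Z < D)
    (hr : 0 < r) : ∃ k : Fin N, (k : ℕ) / (r * D) = X ∧ (k : ℕ) % D = Z := by
  obtain ⟨k, hk⟩ := card_pos.1 (hr.trans_eq (card_filter_div_eq_and_mod_eq hN hX hZ).symm)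
  exact ⟨k, (mem_filter.1 hk).2⟩

namespace Pattern

variable {π π₁ π₂ : Pattern}

lemma mul_c : (π₁ * π₂).c = π₂.a * π₂.c / π₁.a := rfl
lemma mul_d : (π₁ * π₂).d = π₂.d := rfl

def rowKey (π : Pattern) (i : ℕ) : ℕ × ℕ := (i / (π.b * π.d), i % π.d)

def colKey (π : Pattern) (j : ℕ) : ℕ × ℕ := (j / (π.c * π.d), j % π.d)

lemma S_eq_eqMatrix (π : Pattern) :
    π.S = eqMatrix (fun i : Fin π.rows => π.rowKey i) (fun j : Fin π.cols => π.colKey j) :=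
  reindex_kron3_eq_eqMatrix π.a π.b π.c π.d

lemma castMat_S {m n : ℕ} (hm : π.rows = m) (hn : π.cols = n) :
    castMat hm hn π.S = eqMatrix (fun i : Fin m => π.rowKey i) (fun j : Fin n => π.colKey j) := by
  rw [S_eq_eqMatrix]
  rfl

lemma card_filter_rowKey_eq_colKey {k : ℕ} (hk : k < π.cols) :
    #{i : Fin π.rows | π.rowKey i = π.colKey k} = π.b := by
  replace hk : k < π.c * π.d * π.a := by simpa only [cols, mul_comm, mul_left_comm] using hk
  have hd : 0 < π.d := Nat.pos_of_ne_zero fun h => by simp [h] at hk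
  simpa only [rowKey, colKey, Prod.ext_iff] using card_filter_div_eq_and_mod_eq (N := π.rows)
    (A := π.a) rfl (Nat.div_lt_of_lt_mul hk) (Nat.mod_lt k hd)

lemma card_filter_rowKey_eq_colKey' {i : ℕ} (hi : i < π.rows) :
    #{j : Fin π.cols | π.rowKey i = π.colKey j} = π.c := by
  replace hi : i < π.b * π.d * π.a := by simpa only [rows, mul_comm, mul_left_comm] using hi
  have hd : 0 < π.d := Nat.pos_of_ne_zero fun h => by simp [h] at hi
  simpa only [rowKey, colKey, Prod.ext_iff, eq_comm] using card_filter_div_eq_and_mod_eq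
    (N := π.cols) (A := π.a) rfl (Nat.div_lt_of_lt_mul hi) (Nat.mod_lt i hd)

lemma exists_rowKey_eq_colKey (hb : 0 < π.b) {k : ℕ} (hk : k < π.cols) :
    ∃ i : Fin π.rows, π.rowKey i = π.colKey k := by
  obtain ⟨i, hi⟩ := card_pos.1 (hb.trans_eq (card_filter_rowKey_eq_colKey hk).symm)
  exact ⟨i, (mem_filter.1 hi).2⟩

lemma exists_rowKey_eq_colKey' (hc : 0 < π.c) {i : ℕ} (hi : i < π.rows) :
    ∃ j : Fin π.cols, π.rowKey i = π.colKey j := by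
  obtain ⟨j, hj⟩ := card_pos.1 (hc.trans_eq (card_filter_rowKey_eq_colKey' hi).symm)
  exact ⟨j, (mem_filter.1 hj).2⟩

namespace Chainable

lemma rk_pos (hch : Chainable π₁ π₂) : 0 < rk π₁ π₂ := hch.2.2.2.1

lemma d_pos (hch : Chainable π₁ π₂) : 0 < π₁.d := by
  obtain ⟨-, -, hr, hpos, -⟩ := hch
  refine Nat.pos_of_ne_zero fun hd => ?_
  rw [hr, hd, Nat.div_zero] at hpos
  exact hpos.false

lemma a_dvd (hch : Chainable π₁ π₂) : π₁.a ∣ π₂.a := hch.2.2.2.2.1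

lemma d_dvd (hch : Chainable π₁ π₂) : π₂.d ∣ π₁.d := hch.2.2.2.2.2

lemma b_mul_d_eq (hch : Chainable π₁ π₂) : π₂.b * π₂.d = rk π₁ π₂ * π₁.d := by
  obtain ⟨-, hd, hr, -⟩ := hch
  rw [rk, hr, Nat.div_mul_cancel hd]

lemma c_eq (hch : Chainable π₁ π₂) (ha : 0 < π₁.a) : π₁.c = π₂.a / π₁.a * rk π₁ π₂ := by
  obtain ⟨hdvd, -, -, -, ⟨t, ht⟩, -⟩ := hch
  have h : π₂.a * rk π₁ π₂ = π₁.a * π₁.c := Nat.mul_div_cancel' hdvd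
  refine Nat.eq_of_mul_eq_mul_left ha ?_
  rw [← h, ht, Nat.mul_div_cancel_left t ha, mul_assoc]

lemma c_mul_d_eq (hch : Chainable π₁ π₂) (ha : 0 < π₁.a) :
    π₁.c * π₁.d = rk π₁ π₂ * π₁.d * (π₂.a / π₁.a) := by
  rw [hch.c_eq ha]; ring

lemma mul_b_mul_d (hch : Chainable π₁ π₂) : (π₁ * π₂).b * π₂.d = π₁.b * π₁.d :=
  Nat.div_mul_cancel (dvd_mul_of_dvd_right hch.d_dvd _)

lemma mul_c_mul_d (hch : Chainable π₁ π₂) :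
    (π₁ * π₂).c * π₂.d = π₂.c * π₂.d * (π₂.a / π₁.a) := by
  rw [mul_c, ← Nat.div_mul_right_comm hch.a_dvd]; ring

lemma cols_eq (hch : Chainable π₁ π₂) (hdim : π₁.cols = π₂.rows) :
    π₁.cols = π₂.a * rk π₁ π₂ * π₁.d := by
  rw [hdim, rows, mul_assoc, hch.b_mul_d_eq, mul_assoc]

lemma card_filter_colKey_eq_and_rowKey_eq (hch : Chainable π₁ π₂) (hdim : π₁.cols = π₂.rows)
    (k₀ : Fin π₁.cols) :
    #{k : Fin π₁.cols | π₁.colKey k = π₁.colKey k₀ ∧ π₂.rowKey k = π₂.rowKey k₀} = rk π₁ π₂ := by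
  have hk₀ : (k₀ : ℕ) < rk π₁ π₂ * π₁.d * π₂.a := by
    simpa only [hch.cols_eq hdim, mul_comm, mul_left_comm] using k₀.isLt
  have hd : 0 < π₁.d := Nat.pos_of_ne_zero fun h => by simp [h] at hk₀
  have ha : 0 < π₁.a := Nat.pos_of_ne_zero fun h => by simpa [cols, h] using k₀.isLt
  have key : ∀ k : ℕ, π₁.colKey k = π₁.colKey k₀ ∧ π₂.rowKey k = π₂.rowKey k₀ ↔
      k / (rk π₁ π₂ * π₁.d) = k₀ / (rk π₁ π₂ * π₁.d) ∧ k % π₁.d = k₀ % π₁.d := by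
    intro k
    simp only [colKey, rowKey, Prod.ext_iff, hch.c_mul_d_eq ha, hch.b_mul_d_eq,
      ← Nat.div_div_eq_div_mul _ _ (π₂.a / π₁.a)]
    rw [← Nat.mod_mod_of_dvd k hch.d_dvd, ← Nat.mod_mod_of_dvd (k₀ : ℕ) hch.d_dvd]
    constructor
    · rintro ⟨⟨-, h₁⟩, h₂, -⟩
      exact ⟨h₂, h₁⟩
    · rintro ⟨h₁, h₂⟩
      simp [h₁, h₂]
  simp only [key]
  exact card_filter_div_eq_and_mod_eq (hch.cols_eq hdim) (Nat.div_lt_of_lt_mul hk₀)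
    (Nat.mod_lt _ hd)

lemma rowKey_mul_eq_colKey_mul_iff (hch : Chainable π₁ π₂) (ha : 0 < π₁.a)
    (hdim : π₁.cols = π₂.rows) (i : ℕ) (j : Fin π₂.cols) :
    (π₁ * π₂).rowKey i = (π₁ * π₂).colKey j ↔
      ∃ k : Fin π₁.cols, π₁.rowKey i = π₁.colKey k ∧ π₂.rowKey k = π₂.colKey j := by
  simp only [rowKey, colKey, Prod.ext_iff, hch.mul_b_mul_d, hch.mul_c_mul_d, mul_d,
    hch.c_mul_d_eq ha, hch.b_mul_d_eq, ← Nat.div_div_eq_div_mul _ _ (π₂.a / π₁.a)]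
  constructor
  · rintro ⟨hdiv, hmod⟩
    have hj : (j : ℕ) < π₂.c * π₂.d * π₂.a := by
      simpa only [cols, mul_comm, mul_left_comm] using j.isLt
    obtain ⟨k, hk₁, hk₂⟩ := exists_div_eq_and_mod_eq (hch.cols_eq hdim)
      (Nat.div_lt_of_lt_mul hj) (Nat.mod_lt i hch.d_pos) hch.rk_pos
    refine ⟨k, ⟨by rw [hk₁, hdiv], hk₂.symm⟩, hk₁, ?_⟩
    rw [← Nat.mod_mod_of_dvd _ hch.d_dvd, hk₂, Nat.mod_mod_of_dvd _ hch.d_dvd, hmod]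
  · rintro ⟨k, ⟨h₁, h₂⟩, h₃, h₄⟩
    refine ⟨by rw [h₁, h₃], ?_⟩
    rw [← Nat.mod_mod_of_dvd i hch.d_dvd, h₂, Nat.mod_mod_of_dvd _ hch.d_dvd, h₄]

end Chainable

end Pattern

open scoped Classical in
/-- **Lemma.** Properties of the equivalence classes of `(S_{π₁}, S_{π₂})`
for a chainable pair `(π₁, π₂)`. -/
theorem classes_of_chainable_pair (π₁ π₂ : Pattern)
    (h₁ : π₁.Pos) (h₂ : π₂.Pos) (hch : Pattern.Chainable π₁ π₂)
    (hdim : π₁.cols = π₂.rows)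
    (hr : (π₁ * π₂).rows = π₁.rows) (hc : (π₁ * π₂).cols = π₂.cols) :
    -- (1) `R_P` and `C_P` are the supports of the `i`-th column of `S_{π₁}` and the
    -- `i`-th row of `S_{π₂}`, for every `i ∈ P`
    (∀ P ∈ classes π₁.S (castMat hdim.symm rfl π₂.S), ∀ k ∈ P,
      rowSupp π₁.S (castMat hdim.symm rfl π₂.S) P =
        Finset.univ.filter (fun i => π₁.S i k ≠ 0) ∧
      colSupp π₁.S (castMat hdim.symm rfl π₂.S) P =
        Finset.univ.filter (fun j => castMat hdim.symm rfl π₂.S k j ≠ 0)) ∧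
    -- (2) the blocks `R_P × C_P` are pairwise disjoint
    (∀ P ∈ classes π₁.S (castMat hdim.symm rfl π₂.S),
      ∀ Q ∈ classes π₁.S (castMat hdim.symm rfl π₂.S), P ≠ Q →
      Disjoint
        (rowSupp π₁.S (castMat hdim.symm rfl π₂.S) P ×ˢ
          colSupp π₁.S (castMat hdim.symm rfl π₂.S) P)
        (rowSupp π₁.S (castMat hdim.symm rfl π₂.S) Q ×ˢ
          colSupp π₁.S (castMat hdim.symm rfl π₂.S) Q)) ∧
    -- (3) `|P| = r(π₁,π₂)`, `|R_P| = b₁`, `|C_P| = c₂`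
    (∀ P ∈ classes π₁.S (castMat hdim.symm rfl π₂.S),
      P.card = Pattern.rk π₁ π₂ ∧
      (rowSupp π₁.S (castMat hdim.symm rfl π₂.S) P).card = π₁.b ∧
      (colSupp π₁.S (castMat hdim.symm rfl π₂.S) P).card = π₂.c) ∧
    -- (4) `supp(S_{π₁*π₂}) = supp(S_{π₁}·S_{π₂}) = ⋃_P R_P × C_P`
    (∀ i j,
      (castMat hr hc (π₁ * π₂).S i j ≠ 0 ↔ (π₁.S * castMat hdim.symm rfl π₂.S) i j ≠ 0) ∧
      ((π₁.S * castMat hdim.symm rfl π₂.S) i j ≠ 0 ↔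
        ∃ P ∈ classes π₁.S (castMat hdim.symm rfl π₂.S),
          i ∈ rowSupp π₁.S (castMat hdim.symm rfl π₂.S) P ∧
          j ∈ colSupp π₁.S (castMat hdim.symm rfl π₂.S) P)) := by
  obtain ⟨ha₁, hb₁, -, -⟩ := h₁
  obtain ⟨-, -, hc₂, -⟩ := h₂
  have hg : ∀ k : Fin π₁.cols, ∃ i : Fin π₁.rows, π₁.rowKey i = π₁.colKey k :=
    fun k => π₁.exists_rowKey_eq_colKey hb₁ k.isLt
  have hf' : ∀ k : Fin π₁.cols, ∃ j : Fin π₂.cols, π₂.rowKey k = π₂.colKey j :=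
    fun k => π₂.exists_rowKey_eq_colKey' hc₂ (hdim ▸ k.isLt)
  rw [Pattern.castMat_S, Pattern.castMat_S, π₁.S_eq_eqMatrix]
  have hL : ∀ k, ∃ i, eqMatrix (fun i : Fin π₁.rows => π₁.rowKey i)
      (fun k : Fin π₁.cols => π₁.colKey k) i k ≠ 0 := by simpa using hg
  have hR : ∀ k, ∃ j, eqMatrix (fun k : Fin π₁.cols => π₂.rowKey k)
      (fun j : Fin π₂.cols => π₂.colKey j) k j ≠ 0 := by simpa using hf'
  refine ⟨fun P hP k hk => ⟨rowSupp_eq_filter hR hP hk, colSupp_eq_filter hL hP hk⟩,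
    fun P hP Q hQ => disjoint_rowSupp_product_colSupp
      (fun _ _ _ _ => contrib_eqMatrix_eq_of_ne_zero) hP hQ,
    fun P hP => ?_, fun i j => ⟨?_, mul_apply_ne_zero_iff_exists_classes⟩⟩
  · obtain ⟨k, hk⟩ := exists_mem_of_mem_classes hP
    refine ⟨?_, ?_, ?_⟩
    · rw [eq_filter_of_mem_classes hP hk]
      simp only [contrib_eqMatrix_eq_iff hg hf']
      exact hch.card_filter_colKey_eq_and_rowKey_eq hdim k
    · rw [rowSupp_eq_filter hR hP hk]
      simpa only [eqMatrix_apply_ne_zero_iff] using π₁.card_filter_rowKey_eq_colKey k.isLt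
    · rw [colSupp_eq_filter hL hP hk]
      simpa only [eqMatrix_apply_ne_zero_iff] using
        π₂.card_filter_rowKey_eq_colKey' (hdim ▸ k.isLt)
  · rw [eqMatrix_apply_ne_zero_iff, hch.rowKey_mul_eq_colKey_mul_iff ha₁ hdim,
      mul_apply_ne_zero_iff]
    simp only [contrib_ne_zero_iff, eqMatrix_apply_ne_zero_iff]
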